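/- arXiv:2407.20334 — 3 statements merged into one kernel-verified Lean document; each statement's English description precedes it below -/
import Mathlib

section
/- Let U, C, M, Q be n×n complex matrices with U unitary, and suppose that U·conj(C)·U† = −C, U·conj(M)·U† = M†, and U·conj(Q)·U† = Q, where conj denotes entrywise complex conjugation. Define Ξ = ((I + C)/2)·M·Q·M†·Q + ((I − C)/2)·M†·Q·M·Q. Then U·conj(Ξ)·U† = Ξ. -/
/-!
Time reversal `X ↦ U * conj X * Uᴴ` is entrywise conjugation followed by conjugation with a unitary,
hence a ring endomorphism of the matrix ring that is conjugate-linear and commutes with `ᴴ`. It fixes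
`Q`, swaps `M` and `Mᴴ` and negates `C`, so it exchanges the two summands of `Ξ`.
-/

open Matrix

/-- The entrywise complex conjugate of a matrix. -/
noncomputable def mconj {n : ℕ} (A : Matrix (Fin n) (Fin n) ℂ) : Matrix (Fin n) (Fin n) ℂ :=
  A.map (starRingEnd ℂ)

lemma mconj_conjTranspose {n : ℕ} (A : Matrix (Fin n) (Fin n) ℂ) :
    mconj Aᴴ = (mconj A)ᴴ := by
  ext i j
  simp [mconj]

lemma mconj_smul {n : ℕ} (c : ℂ) (A : Matrix (Fin n) (Fin n) ℂ) :
    mconj (c • A) = starRingEnd ℂ c • mconj A := by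
  ext i j
  simp [mconj]

noncomputable def timeReversal {n : ℕ} (U : unitaryGroup (Fin n) ℂ) :
    Matrix (Fin n) (Fin n) ℂ →+* Matrix (Fin n) (Fin n) ℂ :=
  (Unitary.conjStarAlgAut ℂ _ U : Matrix (Fin n) (Fin n) ℂ ≃+* _).toRingHom.comp
    (starRingEnd ℂ).mapMatrix

section timeReversal

variable {n : ℕ} (U : unitaryGroup (Fin n) ℂ)

lemma timeReversal_apply (X : Matrix (Fin n) (Fin n) ℂ) :
    timeReversal U X = (U : Matrix (Fin n) (Fin n) ℂ) * mconj X * (U : Matrix _ _ ℂ)ᴴ :=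
  rfl

lemma timeReversal_conjTranspose (X : Matrix (Fin n) (Fin n) ℂ) :
    timeReversal U Xᴴ = (timeReversal U X)ᴴ := by
  simp only [timeReversal_apply, mconj_conjTranspose, conjTranspose_mul,
    conjTranspose_conjTranspose, mul_assoc]

lemma timeReversal_smul (c : ℂ) (X : Matrix (Fin n) (Fin n) ℂ) :
    timeReversal U (c • X) = starRingEnd ℂ c • timeReversal U X := by
  simp only [timeReversal_apply, mconj_smul, Matrix.mul_smul, Matrix.smul_mul]

end timeReversal

/-- time-reversal symmetry of Ξ. -/
theorem stmt0 {n : ℕ} (U C M Q Ξ : Matrix (Fin n) (Fin n) ℂ)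
    (hU : U ∈ Matrix.unitaryGroup (Fin n) ℂ)
    (hC : U * mconj C * Uᴴ = -C)
    (hM : U * mconj M * Uᴴ = Mᴴ)
    (hQ : U * mconj Q * Uᴴ = Q)
    (hΞ : Ξ = ((2 : ℂ)⁻¹ • ((1 : Matrix (Fin n) (Fin n) ℂ) + C)) * (M * Q * Mᴴ * Q)
        + ((2 : ℂ)⁻¹ • ((1 : Matrix (Fin n) (Fin n) ℂ) - C)) * (Mᴴ * Q * M * Q)) :
    U * mconj Ξ * Uᴴ = Ξ := by
  set u : unitaryGroup (Fin n) ℂ := ⟨U, hU⟩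
  change timeReversal u C = -C at hC
  change timeReversal u M = Mᴴ at hM
  change timeReversal u Q = Q at hQ
  change timeReversal u Ξ = Ξ
  have hMH : timeReversal u Mᴴ = M := by
    rw [timeReversal_conjTranspose, hM, conjTranspose_conjTranspose]
  have hconj_two_inv : starRingEnd ℂ 2⁻¹ = 2⁻¹ := by rw [map_inv₀, map_ofNat]
  subst hΞ
  simp only [map_add, map_sub, map_mul, map_one, timeReversal_smul, hconj_two_inv, hC, hM, hQ, hMH,
    sub_neg_eq_add, ← sub_eq_add_neg]
  exact add_comm _ _
end

section
/- Let S be an n×n Hermitian complex matrix with S² = I and let P be an n×n orthogonal projection (P = P† = P²). Then ‖S·P − P·S‖ ≤ 1 in spectral norm. -/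
open Matrix
open scoped Matrix.Norms.L2Operator

lemma aux_norm_le_one {n : ℕ} (A : Matrix (Fin n) (Fin n) ℂ)
    (hherm : A = Aᴴ) (hinv : A * A = 1) : ‖A‖ ≤ 1 := by
  have h1 : ‖(1 : Matrix (Fin n) (Fin n) ℂ)‖ ≤ 1 := by
    have := CStarRing.norm_star_mul_self (x := (1 : Matrix (Fin n) (Fin n) ℂ))
    simp only [star_one, one_mul] at this
    nlinarith [norm_nonneg (1 : Matrix (Fin n) (Fin n) ℂ)]
  have h2 : ‖A‖ * ‖A‖ ≤ 1 := by
    have := CStarRing.norm_star_mul_self (x := A)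
    rw [show star A = A from by rw [Matrix.star_eq_conjTranspose, ← hherm], hinv] at this
    linarith
  nlinarith [norm_nonneg A]

/-- for a Hermitian involution `S` and an orthogonal projection `P`,
`‖SP − PS‖ ≤ 1` in spectral norm. -/
theorem stmt12 {n : ℕ} (S P : Matrix (Fin n) (Fin n) ℂ)
    (hS_herm : S = Sᴴ) (hS_inv : S * S = 1)
    (hP_herm : P = Pᴴ) (hP_idem : P * P = P) :
    ‖S * P - P * S‖ ≤ 1 := by
  set E : Matrix (Fin n) (Fin n) ℂ := (2:ℂ) • P - 1 with hE
  have hEherm : E = Eᴴ := by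
    simp [hE, conjTranspose_smul, ← hP_herm]
  have hEinv : E * E = 1 := by
    simp only [hE, sub_mul, mul_sub, smul_mul_assoc, mul_smul_comm, hP_idem, one_mul, mul_one,
      smul_smul]
    module
  have hSnorm := aux_norm_le_one S hS_herm hS_inv
  have hEnorm := aux_norm_le_one E hEherm hEinv
  have key : S * P - P * S = (2⁻¹ : ℂ) • (S * E - E * S) := by
    simp only [hE, mul_sub, sub_mul, mul_one, one_mul, mul_smul_comm, smul_mul_assoc]
    module
  rw [key]
  have hnn : (0:ℝ) ≤ ‖S‖ := norm_nonneg S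
  have hnn2 : (0:ℝ) ≤ ‖E‖ := norm_nonneg E
  calc ‖(2⁻¹ : ℂ) • (S * E - E * S)‖ = 2⁻¹ * ‖S * E - E * S‖ := by
        rw [norm_smul]; norm_num
    _ ≤ 2⁻¹ * (‖S * E‖ + ‖E * S‖) := by
        have := norm_sub_le (S * E) (E * S); linarith
    _ ≤ 2⁻¹ * (‖S‖ * ‖E‖ + ‖E‖ * ‖S‖) := by
        have h1 := norm_mul_le S E
        have h2 := norm_mul_le E S
        linarith
    _ ≤ 1 := by nlinarith
end

section
/- Let S = fromBlocks(A, D, D†, B) be a Hermitian complex matrix (A = A† of size n×n, B = B† of size m×m, D of size n×m) with S² = I, and let P = fromBlocks(I, 0, 0, 0). Then ‖[S,P]‖ ≤ 1, and ‖[S,P]‖ = 1 if and only if det(A) = 0; equivalently, ‖[S,P]‖ < 1 if and only if A is invertible. -/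
open Matrix
open scoped Matrix.Norms.L2Operator

private lemma aux_pyth {ι : Type*} [Fintype ι] [DecidableEq ι]
    {C N : Matrix ι ι ℂ} (h : Cᴴ * C + Nᴴ * N = 1) (x : EuclideanSpace ℂ ι) :
    ‖toEuclideanCLM (𝕜 := ℂ) C x‖^2 + ‖toEuclideanCLM (𝕜 := ℂ) N x‖^2 = ‖x‖^2 := by
  have e1 : (inner ℂ (toEuclideanCLM (𝕜 := ℂ) C x) (toEuclideanCLM (𝕜 := ℂ) C x) : ℂ)
      + inner ℂ (toEuclideanCLM (𝕜 := ℂ) N x) (toEuclideanCLM (𝕜 := ℂ) N x)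
      = (inner ℂ x x : ℂ) := by
    simp only [EuclideanSpace.inner_eq_star_dotProduct, ofLp_toEuclideanCLM, toLin'_apply]
    rw [star_mulVec, star_mulVec, dotProduct_comm (C *ᵥ WithLp.ofLp x),
      dotProduct_comm (N *ᵥ WithLp.ofLp x), dotProduct_comm (WithLp.ofLp x), ← dotProduct_mulVec, ← dotProduct_mulVec,
      mulVec_mulVec, mulVec_mulVec, ← dotProduct_add, ← add_mulVec, h, one_mulVec]
  rw [inner_self_eq_norm_sq_to_K, inner_self_eq_norm_sq_to_K, inner_self_eq_norm_sq_to_K] at e1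
  exact_mod_cast e1

/-- for a Hermitian involution `S = fromBlocks A D D† B` and
`P = fromBlocks 1 0 0 0`, `‖[S,P]‖ ≤ 1`, with equality iff `det A = 0`, equivalently
`‖[S,P]‖ < 1` iff `A` is invertible. -/
theorem stmt13 {n m : ℕ} (A : Matrix (Fin n) (Fin n) ℂ) (B : Matrix (Fin m) (Fin m) ℂ)
    (D : Matrix (Fin n) (Fin m) ℂ)
    (hA : A = Aᴴ) (hB : B = Bᴴ)
    (hS : Matrix.fromBlocks A D Dᴴ B * Matrix.fromBlocks A D Dᴴ B = 1) :
    ‖Matrix.fromBlocks A D Dᴴ B * Matrix.fromBlocks (1 : Matrix (Fin n) (Fin n) ℂ) 0 0 0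
        - Matrix.fromBlocks (1 : Matrix (Fin n) (Fin n) ℂ) 0 0 0 *
            Matrix.fromBlocks A D Dᴴ B‖ ≤ 1
    ∧ (‖Matrix.fromBlocks A D Dᴴ B * Matrix.fromBlocks (1 : Matrix (Fin n) (Fin n) ℂ) 0 0 0
        - Matrix.fromBlocks (1 : Matrix (Fin n) (Fin n) ℂ) 0 0 0 *
            Matrix.fromBlocks A D Dᴴ B‖ = 1 ↔ A.det = 0)
    ∧ (‖Matrix.fromBlocks A D Dᴴ B * Matrix.fromBlocks (1 : Matrix (Fin n) (Fin n) ℂ) 0 0 0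
        - Matrix.fromBlocks (1 : Matrix (Fin n) (Fin n) ℂ) 0 0 0 *
            Matrix.fromBlocks A D Dᴴ B‖ < 1 ↔ IsUnit A) := by
  classical
  have hC : Matrix.fromBlocks A D Dᴴ B * Matrix.fromBlocks (1 : Matrix (Fin n) (Fin n) ℂ) 0 0 0
      - Matrix.fromBlocks (1 : Matrix (Fin n) (Fin n) ℂ) 0 0 0 * Matrix.fromBlocks A D Dᴴ B
      = Matrix.fromBlocks 0 (-D) Dᴴ 0 := by
    rw [fromBlocks_multiply, fromBlocks_multiply]
    ext (i|i) (j|j) <;> simp [fromBlocks]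
  rw [hC]
  rw [fromBlocks_multiply, ← fromBlocks_one] at hS
  have h11 : A * A + D * Dᴴ = 1 := by
    have := congrArg Matrix.toBlocks₁₁ hS
    simpa only [Matrix.toBlocks_fromBlocks₁₁] using this
  have h12 : A * D + D * B = 0 := by
    have := congrArg Matrix.toBlocks₁₂ hS
    simpa only [Matrix.toBlocks_fromBlocks₁₂] using this
  have h22 : Dᴴ * D + B * B = 1 := by
    have := congrArg Matrix.toBlocks₂₂ hS
    simpa only [Matrix.toBlocks_fromBlocks₂₂] using this
  set Cm : Matrix (Fin n ⊕ Fin m) (Fin n ⊕ Fin m) ℂ := Matrix.fromBlocks 0 (-D) Dᴴ 0 with hCm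
  set Nm : Matrix (Fin n ⊕ Fin m) (Fin n ⊕ Fin m) ℂ := Matrix.fromBlocks A 0 0 B with hNm
  have hKey : Cmᴴ * Cm + Nmᴴ * Nm = 1 := by
    have hCC : Cmᴴ * Cm = fromBlocks (D * Dᴴ) 0 0 (Dᴴ * D) := by
      rw [hCm, fromBlocks_conjTranspose, fromBlocks_multiply]; simp
    have hNN : Nmᴴ * Nm = fromBlocks (A * A) 0 0 (B * B) := by
      rw [hNm, fromBlocks_conjTranspose, ← hA, ← hB, fromBlocks_multiply]; simp
    rw [hCC, hNN, fromBlocks_add, add_comm (D * Dᴴ) (A * A), h11, h22]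
    simpa using fromBlocks_one
  set f := toEuclideanCLM (𝕜 := ℂ) Cm with hf
  set g := toEuclideanCLM (𝕜 := ℂ) Nm with hg
  have hnf : ‖Cm‖ = ‖f‖ := rfl
  -- detB → detA
  have hBA : ∀ v : Fin m → ℂ, v ≠ 0 → B *ᵥ v = 0 → A.det = 0 := by
    intro v hv hBv
    have hu : A *ᵥ (D *ᵥ v) = 0 := by
      rw [mulVec_mulVec, show A * D = -(D * B) by linear_combination (norm := module) h12,
        neg_mulVec, ← mulVec_mulVec, hBv, mulVec_zero, neg_zero]
    have hDv : D *ᵥ v ≠ 0 := by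
      intro h0
      have : (Dᴴ * D) *ᵥ v = v := by
        rw [show Dᴴ * D = 1 - B * B by linear_combination (norm := module) h22, sub_mulVec,
          one_mulVec, ← mulVec_mulVec, hBv, mulVec_zero, sub_zero]
      rw [← mulVec_mulVec, h0, mulVec_zero] at this
      exact hv this.symm
    exact (Matrix.exists_mulVec_eq_zero_iff).mp ⟨D *ᵥ v, hDv, hu⟩
  -- upper bound
  have hle : ‖Cm‖ ≤ 1 := by
    rw [hnf]
    refine ContinuousLinearMap.opNorm_le_bound _ zero_le_one fun x => ?_
    rw [one_mul]
    have h2 := aux_pyth hKey x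
    nlinarith [norm_nonneg (f x), norm_nonneg (g x), norm_nonneg x, sq_nonneg (‖g x‖)]
  -- det A = 0 → norm = 1
  have hlow : A.det = 0 → ‖Cm‖ = 1 := by
    intro hdet
    obtain ⟨v, hv0, hAv⟩ := (Matrix.exists_mulVec_eq_zero_iff).mpr hdet
    set x : EuclideanSpace ℂ (Fin n ⊕ Fin m) :=
      (WithLp.equiv 2 _).symm (Sum.elim v 0) with hx
    have hgx : g x = 0 := by
      have : WithLp.equiv 2 _ (g x) = 0 := by
        rw [hg, WithLp.equiv_apply, ofLp_toEuclideanCLM, hx, WithLp.equiv_symm_apply, WithLp.ofLp_toLp,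
          hNm, fromBlocks_mulVec]
        simp [hAv]
      simpa using congrArg (WithLp.equiv 2 _).symm this
    have hxne : x ≠ 0 := by
      intro h0
      apply hv0
      have := congrArg (fun y => (WithLp.equiv 2 ((Fin n ⊕ Fin m) → ℂ)) y ∘ Sum.inl) h0
      simpa [hx] using this
    have h2 := aux_pyth hKey x
    rw [hgx] at h2
    simp only [norm_zero] at h2
    have hfx : ‖f x‖ = ‖x‖ := by
      have := h2
      rw [← pow_left_inj₀ (norm_nonneg _) (norm_nonneg _) two_ne_zero]
      linarith
    have hxpos : (0:ℝ) < ‖x‖ := norm_pos_iff.mpr hxne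
    have := f.le_opNorm x
    rw [hfx] at this
    have h1le : 1 ≤ ‖f‖ := (le_mul_iff_one_le_left hxpos).mp this
    exact le_antisymm hle (hnf ▸ h1le)
  -- norm = 1 → det A = 0
  have hupp : ‖Cm‖ = 1 → A.det = 0 := by
    intro h1
    have hCne : Cm ≠ 0 := by
      intro h0; rw [h0, norm_zero] at h1; exact one_ne_zero h1.symm
    obtain ⟨i, j, hij⟩ : ∃ i j, Cm i j ≠ 0 := by
      by_contra hcon; push_neg at hcon
      exact hCne (by ext i j; simpa using hcon i j)
    haveI : Nonempty (Fin n ⊕ Fin m) := ⟨i⟩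
    obtain ⟨x₀, hx₀S, hmax⟩ := (isCompact_sphere (0 : EuclideanSpace ℂ (Fin n ⊕ Fin m)) 1).exists_isMaxOn
      (NormedSpace.sphere_nonempty.mpr zero_le_one) (f.continuous.norm.continuousOn)
    have hx₀ : ‖x₀‖ = 1 := mem_sphere_zero_iff_norm.mp hx₀S
    have hfle : ‖f‖ ≤ ‖f x₀‖ := by
      refine ContinuousLinearMap.opNorm_le_bound _ (norm_nonneg _) fun y => ?_
      rcases eq_or_ne y 0 with rfl | hy
      · simp
      · have hny : (0:ℝ) < ‖y‖ := norm_pos_iff.mpr hy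
        set u : EuclideanSpace ℂ (Fin n ⊕ Fin m) := ((‖y‖ : ℂ))⁻¹ • y with hu
        have hun : ‖u‖ = 1 := by
          rw [hu, norm_smul, norm_inv, Complex.norm_real, Real.norm_eq_abs,
            abs_of_pos hny, inv_mul_cancel₀ hny.ne']
        have huS : u ∈ Metric.sphere (0 : EuclideanSpace ℂ (Fin n ⊕ Fin m)) 1 :=
          mem_sphere_zero_iff_norm.mpr hun
        have hyu : y = (‖y‖ : ℂ) • u := by
          rw [hu, smul_smul, mul_inv_cancel₀ (by exact_mod_cast hny.ne'), one_smul]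
        have hfyu : f y = (‖y‖ : ℂ) • f u := by
          conv_lhs => rw [hyu]
          exact _root_.map_smul f _ _
        calc ‖f y‖ = ‖(‖y‖ : ℂ)‖ * ‖f u‖ := by rw [hfyu, norm_smul]
          _ = ‖y‖ * ‖f u‖ := by rw [Complex.norm_real, Real.norm_eq_abs, abs_of_pos hny]
          _ ≤ ‖y‖ * ‖f x₀‖ := by
              exact mul_le_mul_of_nonneg_left (hmax huS) hny.le
          _ = ‖f x₀‖ * ‖y‖ := mul_comm _ _
    have hfx₀ : ‖f x₀‖ = 1 := by
      have hub : ‖f x₀‖ ≤ 1 := by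
        have := f.le_opNorm x₀
        rw [hx₀, mul_one, ← hnf, h1] at this
        exact this
      have hlb : 1 ≤ ‖f x₀‖ := by rw [← h1, hnf]; exact hfle
      linarith
    have h2 := aux_pyth hKey x₀
    rw [hfx₀, hx₀] at h2
    have hgx₀ : g x₀ = 0 := by
      have : ‖g x₀‖ = 0 := by
        have : ‖g x₀‖^2 = 0 := by linarith
        exact pow_eq_zero_iff two_ne_zero |>.mp this
      exact norm_eq_zero.mp this
    -- extract components
    set w : (Fin n ⊕ Fin m) → ℂ := WithLp.equiv 2 _ x₀ with hw
    have hNw : Nm *ᵥ w = 0 := by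
      have := congrArg (WithLp.equiv 2 ((Fin n ⊕ Fin m) → ℂ)) hgx₀
      rw [hg, WithLp.equiv_apply, ofLp_toEuclideanCLM] at this
      simpa [hw] using this
    have hwelim : w = Sum.elim (w ∘ Sum.inl) (w ∘ Sum.inr) := by
      funext z; cases z <;> rfl
    rw [hwelim, hNm, fromBlocks_mulVec] at hNw
    have hAv : A *ᵥ (w ∘ Sum.inl) = 0 := by
      funext i
      have := congrFun hNw (Sum.inl i)
      simpa using this
    have hBv : B *ᵥ (w ∘ Sum.inr) = 0 := by
      funext i
      have := congrFun hNw (Sum.inr i)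
      simpa using this
    have hwne : w ≠ 0 := by
      intro h0
      have : x₀ = 0 := by
        have := congrArg (WithLp.equiv 2 ((Fin n ⊕ Fin m) → ℂ)).symm h0
        simpa [hw] using this
      rw [this, norm_zero] at hx₀; exact one_ne_zero hx₀.symm
    rcases eq_or_ne (w ∘ Sum.inl) 0 with h1' | h1'
    · have h2' : (w ∘ Sum.inr) ≠ 0 := by
        intro h2'
        apply hwne
        funext z; cases z with
        | inl i => exact congrFun h1' i
        | inr i => exact congrFun h2' i
      exact hBA _ h2' hBv
    · exact (Matrix.exists_mulVec_eq_zero_iff).mp ⟨_, h1', hAv⟩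
  refine ⟨hle, ⟨hupp, hlow⟩, ?_⟩
  constructor
  · intro hlt
    rw [Matrix.isUnit_iff_isUnit_det, isUnit_iff_ne_zero]
    intro hdet
    exact absurd (hlow hdet) (ne_of_lt hlt)
  · intro hU
    have hdet : A.det ≠ 0 := ((Matrix.isUnit_iff_isUnit_det A).mp hU).ne_zero
    exact lt_of_le_of_ne hle fun heq => hdet (hupp heq)
end
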